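/- Greedy step correctness: Let B = {B1,...,Bm} be regular blocks sorted in descending order under the total order on sizes, and C a set of non-overlapping containers such that (B, C) has a solution. Let ŝ be the least size dominating all block sizes, let S be the containers in σ(C, ŝ) of size ⪰ Size(B1), and let C* be any size-minimal element of S. Then there is a solution in which B1 is placed at the lower-left corner of C*; equivalently, the residual problem (B \ {B1}, (C \ {C*}) ∪ pieces-of(C* \ B1(Loc(C*)))) also has a solution. -/

import Mathlib

/-- The half-open rectangular region `[x, x+w) × [y, y+h) ⊆ ℤ²`. -/
def Reg (x y w h : ℤ) : Set (ℤ × ℤ) :=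
  Set.Ico x (x + w) ×ˢ Set.Ico y (y + h)

/-- Region of a container given as a tuple `(x, y, w, h)`. -/
def RegT (c : ℤ × ℤ × ℤ × ℤ) : Set (ℤ × ℤ) :=
  Reg c.1 c.2.1 c.2.2.1 c.2.2.2

/-- A solution to the constrained packing problem. -/
def IsSolution (m : ℕ) (wB hB : Fin m → ℤ) (𝒞 : Set (ℤ × ℤ × ℤ × ℤ))
    (x y : Fin m → ℤ) : Prop :=
  (∀ i, wB i ∣ x i ∧ hB i ∣ y i) ∧
  (∀ i j, i ≠ j →
    Reg (x i) (y i) (wB i) (hB i) ∩ Reg (x j) (y j) (wB j) (hB j) = ∅) ∧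
  (∀ i, ∃ c ∈ 𝒞, Reg (x i) (y i) (wB i) (hB i) ⊆ RegT c)

/-- `S` is a finite set of pairwise non-overlapping regular aligned containers of
size `⪯ [w,h]` whose union is the container `c`. -/
def GoodCut (q1 q2 : ℕ) (w h : ℤ) (c : ℤ × ℤ × ℤ × ℤ)
    (S : Set (ℤ × ℤ × ℤ × ℤ)) : Prop :=
  S.Finite ∧
  (∀ d ∈ S, ∃ a b : ℕ,
      d.2.2.1 = (q1 : ℤ) ^ a ∧ d.2.2.2 = (q2 : ℤ) ^ b ∧
      d.2.2.1 ∣ d.1 ∧ d.2.2.2 ∣ d.2.1 ∧ d.2.2.1 ≤ w ∧ d.2.2.2 ≤ h) ∧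
  (∀ d ∈ S, ∀ d' ∈ S, d ≠ d' → RegT d ∩ RegT d' = ∅) ∧
  (⋃ d ∈ S, RegT d) = RegT c

/-- `σ(c,[w,h])`: `S` is a smallest good cut of `c`. -/
def SigmaCut (q1 q2 : ℕ) (w h : ℤ) (c : ℤ × ℤ × ℤ × ℤ)
    (S : Set (ℤ × ℤ × ℤ × ℤ)) : Prop :=
  GoodCut q1 q2 w h c S ∧ ∀ T, GoodCut q1 q2 w h c T → S.ncard ≤ T.ncard

/-- The strict total order on sizes: compare `max(w,h)`, then `w`, then `h`. -/
def sizeLT (s t : ℤ × ℤ) : Prop :=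
  max s.1 s.2 < max t.1 t.2 ∨
  (max s.1 s.2 = max t.1 t.2 ∧ s.1 < t.1) ∨
  (max s.1 s.2 = max t.1 t.2 ∧ s.1 = t.1 ∧ s.2 < t.2)

/-- The corresponding total (non-strict) order on sizes. -/
def sizeLE (s t : ℤ × ℤ) : Prop := s = t ∨ sizeLT s t

/-!
Every block of a solution in `𝒞` is aligned and no larger than `ŝ`, and in a smallest cut such a
block always lies in a single piece: otherwise the pieces meeting a maximal aligned box around it,
grown along the column (or, transposed, the row) of the block, could be merged into one piece,
giving a smaller cut. So the given solution is already one in `σ(𝒞, ŝ)`.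

The largest block `B1` has the full width (say) of every piece tall enough for it, so `C*` is the
shortest such piece. Exchanging the contents of `C*` with the aligned slab of the same height
around `B1` in its container moves `B1` into `C*`; then repeatedly exchanging the two slabs of
height `q2 ^ s` meeting at `B1`, where `q2 ^ s` exactly divides the offset of `B1` in `C*`, lowers
`B1` to the corner. Aligned blocks are either inside or outside such slabs, and a taller block
crossing one of them would overlap `B1`.
-/

/-! ### Rectangles and aligned intervals -/

lemma mem_Reg {x y w h : ℤ} {p : ℤ × ℤ} :
    p ∈ Reg x y w h ↔ (x ≤ p.1 ∧ p.1 < x + w) ∧ (y ≤ p.2 ∧ p.2 < y + h) := by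
  simp [Reg, Set.mem_prod, Set.mem_Ico]

lemma RegT_eq (c : ℤ × ℤ × ℤ × ℤ) : RegT c = Reg c.1 c.2.1 c.2.2.1 c.2.2.2 := rfl

lemma Reg_subset_iff {x y w h x' y' w' h' : ℤ} (hw : 0 < w) (hh : 0 < h) :
    Reg x y w h ⊆ Reg x' y' w' h' ↔
      x' ≤ x ∧ x + w ≤ x' + w' ∧ y' ≤ y ∧ y + h ≤ y' + h' := by
  constructor
  · intro hs
    have h₁ := mem_Reg.1 (hs ((mem_Reg (p := (x, y))).2 (by omega)))
    have h₂ := mem_Reg.1 (hs ((mem_Reg (p := (x + w - 1, y + h - 1))).2 (by omega)))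
    simp only at h₁ h₂
    omega
  · rintro ⟨h₁, h₂, h₃, h₄⟩ p hp
    rw [mem_Reg] at hp ⊢
    omega

lemma Reg_inter_nonempty_iff {x y w h x' y' w' h' : ℤ}
    (hw : 0 < w) (hh : 0 < h) (hw' : 0 < w') (hh' : 0 < h') :
    (Reg x y w h ∩ Reg x' y' w' h').Nonempty ↔
      (x < x' + w' ∧ x' < x + w) ∧ (y < y' + h' ∧ y' < y + h) := by
  constructor
  · rintro ⟨p, hp, hp'⟩
    rw [mem_Reg] at hp hp'
    omega
  · intro hov
    exact ⟨(max x x', max y y'), mem_Reg.2 (by omega), mem_Reg.2 (by omega)⟩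

lemma Reg_inter_eq_empty_iff {x y w h x' y' w' h' : ℤ}
    (hw : 0 < w) (hh : 0 < h) (hw' : 0 < w') (hh' : 0 < h') :
    Reg x y w h ∩ Reg x' y' w' h' = ∅ ↔
      x' + w' ≤ x ∨ x + w ≤ x' ∨ y' + h' ≤ y ∨ y + h ≤ y' := by
  rw [← Set.not_nonempty_iff_eq_empty, Reg_inter_nonempty_iff hw hh hw' hh']
  omega

lemma image_add_Reg (x y w h : ℤ) (a : ℤ × ℤ) :
    (· + a) '' Reg x y w h = Reg (x + a.1) (y + a.2) w h := by
  ext p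
  simp only [Set.mem_image, mem_Reg]
  constructor
  · rintro ⟨p, hp, rfl⟩
    simp only [Prod.fst_add, Prod.snd_add]
    omega
  · intro hp
    exact ⟨p - a, by simp only [Prod.fst_sub, Prod.snd_sub]; omega, sub_add_cancel p a⟩

lemma disjoint_of_subset_RegT {𝒟 : Set (ℤ × ℤ × ℤ × ℤ)}
    (h𝒟disj : ∀ c ∈ 𝒟, ∀ c' ∈ 𝒟, c ≠ c' → RegT c ∩ RegT c' = ∅)
    {d d' : ℤ × ℤ × ℤ × ℤ} (hd : d ∈ 𝒟) (hd' : d' ∈ 𝒟) (hne : d ≠ d') {A B : Set (ℤ × ℤ)}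
    (hA : A ⊆ RegT d) (hB : B ⊆ RegT d') : Disjoint A B :=
  (Set.disjoint_iff_inter_eq_empty.2 (h𝒟disj d hd d' hd' hne)).mono hA hB

lemma Ico_nested_of_dvd {a b u v : ℤ} (hab : a ∣ b) (hu : a ∣ u) (hv : b ∣ v)
    (h₁ : u < v + b) (h₂ : v < u + a) : v ≤ u ∧ u + a ≤ v + b := by
  have key : ∀ {s t : ℤ}, a ∣ s - t → s < t + a → s ≤ t := fun hd hlt => by
    by_contra hc
    have := Int.le_of_dvd (by omega) hd
    omega
  have hav : a ∣ v := hab.trans hv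
  refine ⟨key (dvd_sub hav hu) h₂, key ?_ (by omega)⟩
  have : u + a - (v + b) = (u - v) + (a - b) := by ring
  rw [this]
  exact dvd_add (dvd_sub hu hav) (dvd_sub dvd_rfl hab)

lemma Ico_nested_or_of_pow_dvd {q a b : ℕ} {u v : ℤ}
    (hu : (q : ℤ) ^ a ∣ u) (hv : (q : ℤ) ^ b ∣ v)
    (h₁ : u < v + (q : ℤ) ^ b) (h₂ : v < u + (q : ℤ) ^ a) :
    (v ≤ u ∧ u + (q : ℤ) ^ a ≤ v + (q : ℤ) ^ b) ∨ (u ≤ v ∧ v + (q : ℤ) ^ b ≤ u + (q : ℤ) ^ a) := by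
  rcases le_total a b with h | h
  · exact .inl (Ico_nested_of_dvd (pow_dvd_pow _ h) hu hv h₁ h₂)
  · exact .inr (Ico_nested_of_dvd (pow_dvd_pow _ h) hv hu h₂ h₁)

lemma Reg_subset_or_disjoint_or_crosses {q : ℕ} (hq : 0 < q) {X v W x' u w' h : ℤ} {s b : ℕ}
    (hv : (q : ℤ) ^ s ∣ v) (hh : h = (q : ℤ) ^ b) (hu : h ∣ u) (hw' : 0 < w')
    (hx' : X ≤ x' ∧ x' + w' ≤ X + W) :
    Reg x' u w' h ⊆ Reg X v W ((q : ℤ) ^ s) ∨ Disjoint (Reg x' u w' h) (Reg X v W ((q : ℤ) ^ s)) ∨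
      (s < b ∧ u ≤ v ∧ v + (q : ℤ) ^ s ≤ u + h) := by
  subst hh
  have hqs : (0 : ℤ) < (q : ℤ) ^ s := by positivity
  have hqb : (0 : ℤ) < (q : ℤ) ^ b := by positivity
  by_cases hov : u < v + (q : ℤ) ^ s ∧ v < u + (q : ℤ) ^ b
  · rcases le_or_gt b s with hbs | hsb
    · have := Ico_nested_of_dvd (pow_dvd_pow _ hbs) hu hv hov.1 hov.2
      exact .inl ((Reg_subset_iff hw' hqb).2 (by omega))
    · exact .inr (.inr ⟨hsb, Ico_nested_of_dvd (pow_dvd_pow _ hsb.le) hv hu hov.2 hov.1⟩)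
  · refine .inr (.inl (Set.disjoint_iff_inter_eq_empty.2 ?_))
    exact (Reg_inter_eq_empty_iff hw' hqb (by omega) hqs).2 (by omega)

lemma pow_dvd_of_Reg_subset {q : ℕ} (hq : 1 < q) {x y w h X Y W : ℤ} {b s : ℕ}
    (hh : h = (q : ℤ) ^ b) (hw : 0 < w) (hsub : Reg x y w h ⊆ Reg X Y W ((q : ℤ) ^ s)) :
    h ∣ (q : ℤ) ^ s := by
  subst hh
  have := (Reg_subset_iff hw (by positivity)).1 hsub
  exact pow_dvd_pow _ ((pow_le_pow_iff_right₀ (a := (q : ℤ)) (by exact_mod_cast hq)).1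
    (by omega))

lemma exists_pow_dvd_between {q : ℕ} (hq : 0 < q) {f c b : ℕ} (hfc : f ≤ c) (hcb : c ≤ b)
    {u v : ℤ} (hu : (q : ℤ) ^ f ∣ u) (hv : (q : ℤ) ^ b ∣ v) (hvu : v ≤ u)
    (huv : u + (q : ℤ) ^ f ≤ v + (q : ℤ) ^ b) :
    ∃ z, (q : ℤ) ^ c ∣ z ∧ v ≤ z ∧ z + (q : ℤ) ^ c ≤ v + (q : ℤ) ^ b ∧
      z ≤ u ∧ u + (q : ℤ) ^ f ≤ z + (q : ℤ) ^ c := by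
  have hqc : (0 : ℤ) < (q : ℤ) ^ c := by positivity
  have hqf : (0 : ℤ) < (q : ℤ) ^ f := by positivity
  obtain ⟨z, hz, hzu, huz⟩ : ∃ z, (q : ℤ) ^ c ∣ z ∧ z ≤ u ∧ u < z + (q : ℤ) ^ c :=
    ⟨u / (q : ℤ) ^ c * (q : ℤ) ^ c, Dvd.intro_left _ rfl, Int.ediv_mul_le u hqc.ne', by
      have := Int.lt_ediv_add_one_mul_self u hqc
      linarith⟩
  have hzv := Ico_nested_of_dvd (pow_dvd_pow _ hcb) hz hv (by omega) (by omega)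
  have hzu := Ico_nested_of_dvd (pow_dvd_pow _ hfc) hu hz (by omega) (by omega)
  exact ⟨z, hz, hzv.1, hzv.2, hzu.1, hzu.2⟩

/-- The exponent `s` is the multiplicity of `q` in `y - a`. -/
lemma exists_exact_pow_dvd_between {q : ℕ} (hq : 1 < q) {c f : ℕ} {a y : ℤ}
    (ha : (q : ℤ) ^ c ∣ a) (hy : (q : ℤ) ^ f ∣ y) (hfc : f ≤ c) (hlt : a < y)
    (hle : y + (q : ℤ) ^ f ≤ a + (q : ℤ) ^ c) :
    ∃ s, f ≤ s ∧ (q : ℤ) ^ (s + 1) ∣ a ∧ (q : ℤ) ^ s ∣ y ∧ ¬ (q : ℤ) ^ (s + 1) ∣ y ∧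
      a + (q : ℤ) ^ s ≤ y ∧ y + (q : ℤ) ^ s ≤ a + (q : ℤ) ^ c := by
  have hq' : (1 : ℤ) < q := by exact_mod_cast hq
  have hfin : FiniteMultiplicity (q : ℤ) (y - a) :=
    Int.finiteMultiplicity_iff.2 ⟨by rw [Int.natAbs_natCast]; omega, by omega⟩
  set s := multiplicity (q : ℤ) (y - a)
  have hsu : (q : ℤ) ^ s ∣ y - a := pow_multiplicity_dvd _ _
  have hfs : f ≤ s := hfin.le_multiplicity_of_pow_dvd (dvd_sub hy ((pow_dvd_pow _ hfc).trans ha))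
  have hus := Int.le_of_dvd (by omega) hsu
  have hqf : (0 : ℤ) < (q : ℤ) ^ f := by positivity
  have hsc : s < c := by
    by_contra! hcs
    have := pow_le_pow_right₀ hq'.le hcs
    omega
  have has : (q : ℤ) ^ s ∣ a := (pow_dvd_pow _ hsc.le).trans ha
  have has' : (q : ℤ) ^ (s + 1) ∣ a := (pow_dvd_pow _ hsc).trans ha
  have htop := Int.le_of_dvd (by omega) (dvd_sub (pow_dvd_pow _ hsc.le) hsu)
  refine ⟨s, hfs, has', by simpa using dvd_add hsu has, fun h => ?_, by omega, by omega⟩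
  exact hfin.not_pow_dvd_of_multiplicity_lt (lt_add_one s) (dvd_sub h has')

/-! ### Transposition -/

def rectSwap (c : ℤ × ℤ × ℤ × ℤ) : ℤ × ℤ × ℤ × ℤ := (c.2.1, c.1, c.2.2.2, c.2.2.1)

lemma rectSwap_rectSwap (c : ℤ × ℤ × ℤ × ℤ) : rectSwap (rectSwap c) = c := rfl

lemma rectSwap_injective : Function.Injective rectSwap :=
  Function.LeftInverse.injective rectSwap_rectSwap

lemma image_rectSwap_image_rectSwap (S : Set (ℤ × ℤ × ℤ × ℤ)) :
    rectSwap '' (rectSwap '' S) = S := by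
  rw [Set.image_image]
  exact Set.image_id' S

lemma image_swap_Reg (x y w h : ℤ) : Prod.swap '' Reg x y w h = Reg y x h w :=
  Set.image_swap_prod _ _

lemma RegT_rectSwap (c : ℤ × ℤ × ℤ × ℤ) : RegT (rectSwap c) = Prod.swap '' RegT c :=
  (image_swap_Reg _ _ _ _).symm

lemma RegT_inter_rectSwap_eq_empty {𝒟 : Set (ℤ × ℤ × ℤ × ℤ)}
    (h𝒟disj : ∀ c ∈ 𝒟, ∀ c' ∈ 𝒟, c ≠ c' → RegT c ∩ RegT c' = ∅) :
    ∀ c ∈ rectSwap '' 𝒟, ∀ c' ∈ rectSwap '' 𝒟, c ≠ c' → RegT c ∩ RegT c' = ∅ := by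
  rintro _ ⟨d, hd, rfl⟩ _ ⟨d', hd', rfl⟩ hne
  rw [RegT_rectSwap, RegT_rectSwap, ← Set.image_inter Prod.swap_injective, Set.image_eq_empty]
  exact h𝒟disj d hd d' hd' (ne_of_apply_ne _ hne)

lemma IsSolution.rectSwap {m : ℕ} {wB hB : Fin m → ℤ} {𝒟 : Set (ℤ × ℤ × ℤ × ℤ)}
    {x y : Fin m → ℤ} (h : IsSolution m wB hB 𝒟 x y) :
    IsSolution m hB wB (rectSwap '' 𝒟) y x := by
  obtain ⟨h₁, h₂, h₃⟩ := h
  refine ⟨fun i => (h₁ i).symm, fun i j hij => ?_, fun i => ?_⟩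
  · rw [← image_swap_Reg (x i), ← image_swap_Reg (x j), ← Set.image_inter Prod.swap_injective,
      Set.image_eq_empty]
    exact h₂ i j hij
  · obtain ⟨d, hd, hsub⟩ := h₃ i
    exact ⟨_, Set.mem_image_of_mem _ hd, by
      rw [← image_swap_Reg (x i), RegT_rectSwap]
      exact Set.image_mono hsub⟩

def IsAlignedPiece (q1 q2 : ℕ) (w h : ℤ) (d : ℤ × ℤ × ℤ × ℤ) : Prop :=
  ∃ a b : ℕ, d.2.2.1 = (q1 : ℤ) ^ a ∧ d.2.2.2 = (q2 : ℤ) ^ b ∧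
    d.2.2.1 ∣ d.1 ∧ d.2.2.2 ∣ d.2.1 ∧ d.2.2.1 ≤ w ∧ d.2.2.2 ≤ h

section AlignedPiece

variable {q1 q2 : ℕ} {w h : ℤ} {d : ℤ × ℤ × ℤ × ℤ}

lemma IsAlignedPiece.rectSwap (hd : IsAlignedPiece q1 q2 w h d) :
    IsAlignedPiece q2 q1 h w (rectSwap d) := by
  obtain ⟨a, b, h₁, h₂, h₃, h₄, h₅, h₆⟩ := hd
  exact ⟨b, a, h₂, h₁, h₄, h₃, h₆, h₅⟩

lemma IsAlignedPiece.pos (hq1 : 0 < q1) (hq2 : 0 < q2) (hd : IsAlignedPiece q1 q2 w h d) :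
    0 < d.2.2.1 ∧ 0 < d.2.2.2 := by
  obtain ⟨a, b, h₁, h₂, -⟩ := hd
  exact ⟨h₁ ▸ by positivity, h₂ ▸ by positivity⟩

lemma IsAlignedPiece.width_le (hd : IsAlignedPiece q1 q2 w h d) : d.2.2.1 ≤ w := by
  obtain ⟨-, -, -, -, -, -, hw, -⟩ := hd
  exact hw

lemma IsAlignedPiece.height_le (hd : IsAlignedPiece q1 q2 w h d) : d.2.2.2 ≤ h := by
  obtain ⟨-, -, -, -, -, -, -, hh⟩ := hd
  exact hh

end AlignedPiece

section Cut

variable {q1 q2 : ℕ} {W H : ℤ} {c : ℤ × ℤ × ℤ × ℤ} {S : Set (ℤ × ℤ × ℤ × ℤ)}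

lemma GoodCut.aligned (hS : GoodCut q1 q2 W H c S) {d : ℤ × ℤ × ℤ × ℤ} (hd : d ∈ S) :
    IsAlignedPiece q1 q2 W H d :=
  hS.2.1 d hd

lemma GoodCut.subset (hS : GoodCut q1 q2 W H c S) {d : ℤ × ℤ × ℤ × ℤ} (hd : d ∈ S) :
    RegT d ⊆ RegT c :=
  hS.2.2.2 ▸ Set.subset_biUnion_of_mem hd

lemma GoodCut.rectSwap (hS : GoodCut q1 q2 W H c S) :
    GoodCut q2 q1 H W (rectSwap c) (rectSwap '' S) := by
  obtain ⟨hfin, hreg, hdisj, hunion⟩ := hS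
  refine ⟨hfin.image _, ?_, RegT_inter_rectSwap_eq_empty hdisj, ?_⟩
  · rintro _ ⟨d, hd, rfl⟩
    exact IsAlignedPiece.rectSwap (hreg d hd)
  · rw [Set.biUnion_image, RegT_rectSwap, ← hunion, Set.image_iUnion₂]
    exact Set.iUnion₂_congr fun d _ => RegT_rectSwap d

lemma SigmaCut.rectSwap (hS : SigmaCut q1 q2 W H c S) :
    SigmaCut q2 q1 H W (rectSwap c) (rectSwap '' S) := by
  refine ⟨hS.1.rectSwap, fun T hT => ?_⟩
  have hT' := hS.2 _ (rectSwap_rectSwap c ▸ hT.rectSwap)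
  rwa [Set.ncard_image_of_injective _ rectSwap_injective] at hT' ⊢

/-! ### Smallest cuts -/

lemma GoodCut.merge {r : ℤ × ℤ × ℤ × ℤ} (hS : GoodCut q1 q2 W H c S)
    (hr : IsAlignedPiece q1 q2 W H r) (hrc : RegT r ⊆ RegT c)
    (hclosed : ∀ d ∈ S, (RegT d ∩ RegT r).Nonempty → RegT d ⊆ RegT r) :
    GoodCut q1 q2 W H c (insert r {d ∈ S | RegT d ∩ RegT r = ∅}) := by
  obtain ⟨hfin, hreg, hdisj, hunion⟩ := hS
  refine ⟨(hfin.subset fun d hd => hd.1).insert r, ?_, ?_, ?_⟩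
  · rintro d (rfl | hd)
    exacts [hr, hreg d hd.1]
  · rintro d (rfl | hd) d' (rfl | hd') hne
    · exact absurd rfl hne
    · rw [Set.inter_comm]
      exact hd'.2
    · exact hd.2
    · exact hdisj d hd.1 d' hd'.1 hne
  · rw [Set.biUnion_insert]
    refine subset_antisymm (Set.union_subset hrc
      (Set.iUnion₂_subset fun d hd => hunion ▸ Set.subset_biUnion_of_mem hd.1)) fun p hp => ?_
    rw [← hunion] at hp
    obtain ⟨d, hd, hpd⟩ := Set.mem_iUnion₂.1 hp
    by_cases hdr : RegT d ∩ RegT r = ∅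
    · exact .inr (Set.mem_biUnion ⟨hd, hdr⟩ hpd)
    · exact .inl (hclosed d hd (Set.nonempty_iff_ne_empty.2 hdr) hpd)

/-- If the pieces meeting `r` tile it, minimality forbids more than one of them, since they
could be merged into the single piece `r`. -/
lemma SigmaCut.exists_superset_of_closed {r : ℤ × ℤ × ℤ × ℤ} (hS : SigmaCut q1 q2 W H c S)
    (hr : IsAlignedPiece q1 q2 W H r) (hrc : RegT r ⊆ RegT c) (hne : (RegT r).Nonempty)
    (hclosed : ∀ d ∈ S, (RegT d ∩ RegT r).Nonempty → RegT d ⊆ RegT r) :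
    ∃ d ∈ S, RegT r ⊆ RegT d := by
  by_contra! hnone
  have hcover : ∀ p ∈ RegT r, ∃ d ∈ S, p ∈ RegT d := fun p hp => by
    obtain ⟨d, hd, hpd⟩ := Set.mem_iUnion₂.1 (hS.1.2.2.2 ▸ hrc hp)
    exact ⟨d, hd, hpd⟩
  obtain ⟨p, hp⟩ := hne
  obtain ⟨d₁, hd₁, hp₁⟩ := hcover p hp
  obtain ⟨p', hp', hp'₁⟩ := Set.not_subset.1 (hnone d₁ hd₁)
  obtain ⟨d₂, hd₂, hp₂⟩ := hcover p' hp'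
  set N := {d ∈ S | (RegT d ∩ RegT r).Nonempty}
  have hNS : N ⊆ S := fun d hd => hd.1
  have hN : 1 < N.ncard := (Set.one_lt_ncard_iff (hS.1.1.subset hNS)).2
    ⟨d₁, d₂, ⟨hd₁, p, hp₁, hp⟩, ⟨hd₂, p', hp₂, hp'⟩, fun h => hp'₁ (h ▸ hp₂)⟩
  have hdiff : {d ∈ S | RegT d ∩ RegT r = ∅} = S \ N := by
    ext d
    simp [N, Set.nonempty_iff_ne_empty]
  have hmerge := hS.2 _ (hS.1.merge hr hrc hclosed)
  rw [hdiff] at hmerge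
  have := Set.ncard_insert_le r (S \ N)
  have := Set.ncard_sdiff hNS (hS.1.1.subset hNS)
  have := Set.ncard_le_ncard hNS hS.1.1
  omega

lemma GoodCut.nested_of_meets (hq1 : 0 < q1) (hq2 : 0 < q2) (hS : GoodCut q1 q2 W H c S)
    {d : ℤ × ℤ × ℤ × ℤ} (hd : d ∈ S) {X Y : ℤ} {α β : ℕ}
    (hX : (q1 : ℤ) ^ α ∣ X) (hY : (q2 : ℤ) ^ β ∣ Y)
    (hmeet : (RegT d ∩ Reg X Y ((q1 : ℤ) ^ α) ((q2 : ℤ) ^ β)).Nonempty) :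
    ((X ≤ d.1 ∧ d.1 + d.2.2.1 ≤ X + (q1 : ℤ) ^ α) ∨
      (d.1 ≤ X ∧ X + (q1 : ℤ) ^ α ≤ d.1 + d.2.2.1)) ∧
    ((Y ≤ d.2.1 ∧ d.2.1 + d.2.2.2 ≤ Y + (q2 : ℤ) ^ β) ∨
      (d.2.1 ≤ Y ∧ Y + (q2 : ℤ) ^ β ≤ d.2.1 + d.2.2.2)) := by
  have hpos := (hS.aligned hd).pos hq1 hq2
  have hov := (Reg_inter_nonempty_iff hpos.1 hpos.2 (by positivity) (by positivity)).1 hmeet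
  obtain ⟨a, b, ha, hb, hx, hy, -⟩ := hS.aligned hd
  rw [ha, hb] at hov ⊢
  exact ⟨Ico_nested_or_of_pow_dvd (ha ▸ hx) hX hov.1.1 hov.1.2,
    Ico_nested_or_of_pow_dvd (hb ▸ hy) hY hov.2.1 hov.2.2⟩

/-- A piece spanning the column horizontally would meet the piece `d` inside the column. -/
lemma GoodCut.narrow_of_meets_rows (hq1 : 0 < q1) (hq2 : 0 < q2) (hS : GoodCut q1 q2 W H c S)
    {X : ℤ} {α : ℕ} (hX : (q1 : ℤ) ^ α ∣ X) {d : ℤ × ℤ × ℤ × ℤ} (hd : d ∈ S)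
    (hdX : X ≤ d.1 ∧ d.1 + d.2.2.1 ≤ X + (q1 : ℤ) ^ α) {d' : ℤ × ℤ × ℤ × ℤ} (hd' : d' ∈ S)
    (hmeet : (RegT d' ∩ Reg X d.2.1 ((q1 : ℤ) ^ α) d.2.2.2).Nonempty) :
    X ≤ d'.1 ∧ d'.1 + d'.2.2.1 ≤ X + (q1 : ℤ) ^ α := by
  obtain ⟨-, b, -, hb, -, hy, -⟩ := hS.aligned hd
  rw [hb] at hmeet
  rcases (hS.nested_of_meets hq1 hq2 hd' hX (hb ▸ hy) hmeet).1 with h | h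
  · exact h
  by_cases heq : d' = d
  · exact heq ▸ hdX
  have hpos := (hS.aligned hd).pos hq1 hq2
  have hpos' := (hS.aligned hd').pos hq1 hq2
  have hov := (Reg_inter_nonempty_iff hpos'.1 hpos'.2 (by positivity) (by positivity)).1 hmeet
  have hdd : (RegT d' ∩ RegT d).Nonempty :=
    (Reg_inter_nonempty_iff hpos'.1 hpos'.2 hpos.1 hpos.2).2 (by omega)
  exact absurd (hS.2.2.1 d' hd' d hd heq) hdd.ne_empty

end Cut

section MinimalCut

variable {q1 q2 : ℕ} {c : ℤ × ℤ × ℤ × ℤ} {S : Set (ℤ × ℤ × ℤ × ℤ)} {E F : ℕ}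

/-- The block's rows are grown to a maximal aligned interval over which no piece crosses the
column `[X, X + q1 ^ α)`; a piece meeting it that were taller would allow growing it further. -/
lemma GoodCut.exists_closed_of_narrow (hq1 : 0 < q1) (hq2 : 1 < q2)
    {W : ℤ} (hS : GoodCut q1 q2 W ((q2 : ℤ) ^ F) c S) {X Y : ℤ} {α β : ℕ} (hβ : β ≤ F)
    (hX : (q1 : ℤ) ^ α ∣ X) (hY : (q2 : ℤ) ^ β ∣ Y)
    (hK : Reg X Y ((q1 : ℤ) ^ α) ((q2 : ℤ) ^ β) ⊆ RegT c)
    (hnarrow : ∀ d ∈ S, (RegT d ∩ Reg X Y ((q1 : ℤ) ^ α) ((q2 : ℤ) ^ β)).Nonempty →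
      X ≤ d.1 ∧ d.1 + d.2.2.1 ≤ X + (q1 : ℤ) ^ α) :
    ∃ e v, e ≤ F ∧ (q2 : ℤ) ^ e ∣ v ∧
      Reg X Y ((q1 : ℤ) ^ α) ((q2 : ℤ) ^ β) ⊆ Reg X v ((q1 : ℤ) ^ α) ((q2 : ℤ) ^ e) ∧
      Reg X v ((q1 : ℤ) ^ α) ((q2 : ℤ) ^ e) ⊆ RegT c ∧
      ∀ d ∈ S, (RegT d ∩ Reg X v ((q1 : ℤ) ^ α) ((q2 : ℤ) ^ e)).Nonempty →
        RegT d ⊆ Reg X v ((q1 : ℤ) ^ α) ((q2 : ℤ) ^ e) := by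
  classical
  set w : ℤ := (q1 : ℤ) ^ α
  have hw0 : 0 < w := by positivity
  have hq2' : 0 < q2 := by omega
  let P : ℕ → Prop := fun e => ∃ v, (q2 : ℤ) ^ e ∣ v ∧ v ≤ Y ∧ Y < v + (q2 : ℤ) ^ e ∧
    Reg X v w ((q2 : ℤ) ^ e) ⊆ RegT c ∧
    ∀ d ∈ S, (RegT d ∩ Reg X v w ((q2 : ℤ) ^ e)).Nonempty → X ≤ d.1 ∧ d.1 + d.2.2.1 ≤ X + w
  have hPβ : P β := ⟨Y, hY, le_rfl, by simp only [lt_add_iff_pos_right]; positivity, hK, hnarrow⟩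
  obtain ⟨v, hv, hvY, hYv, hRc, hRnarrow⟩ := Nat.findGreatest_spec hβ hPβ
  set e := Nat.findGreatest P F
  have hβe : β ≤ e := Nat.le_findGreatest hβ hPβ
  refine ⟨e, v, Nat.findGreatest_le F, hv, ?_, hRc, fun d hd hmeet => ?_⟩
  · have := Ico_nested_of_dvd (pow_dvd_pow _ hβe) hY hv (by omega)
      (by have : (0 : ℤ) < (q2 : ℤ) ^ β := by positivity
          omega)
    rw [Reg_subset_iff hw0 (by positivity)]
    omega
  obtain ⟨-, b, -, hb, -, hy, -, hbF⟩ := hS.aligned hd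
  have hpos := (hS.aligned hd).pos hq1 hq2'
  have hdX := hRnarrow d hd hmeet
  have hov := (Reg_inter_nonempty_iff hpos.1 hpos.2 hw0 (by positivity)).1 hmeet
  rw [hb] at hov hy
  rw [RegT_eq, Reg_subset_iff hpos.1 hpos.2, hb]
  rcases le_or_gt b e with hbe | heb
  · have := Ico_nested_of_dvd (pow_dvd_pow _ hbe) hy hv hov.2.1 hov.2.2
    omega
  exfalso
  have hsup := Ico_nested_of_dvd (pow_dvd_pow _ heb.le) hv hy hov.2.2 hov.2.1
  have hKc := (Reg_subset_iff hw0 (by positivity)).1 hK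
  have hdc := (Reg_subset_iff hpos.1 hpos.2).1 (hS.subset hd)
  have hPb : P b := by
    refine ⟨d.2.1, hy, by omega, by omega, ?_, fun d' hd' hm => ?_⟩
    · rw [RegT_eq, Reg_subset_iff hw0 (by positivity)]
      rw [hb] at hdc
      omega
    · exact hS.narrow_of_meets_rows hq1 hq2' hX hd hdX hd' (hb ▸ hm)
  exact heb.not_ge (Nat.le_findGreatest ((pow_le_pow_iff_right₀ (by exact_mod_cast hq2)).1
    (hb ▸ hbF)) hPb)

lemma SigmaCut.exists_superset_block_of_narrow (hq1 : 0 < q1) (hq2 : 1 < q2)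
    (hS : SigmaCut q1 q2 ((q1 : ℤ) ^ E) ((q2 : ℤ) ^ F) c S) {X Y : ℤ} {α β : ℕ}
    (hα : α ≤ E) (hβ : β ≤ F) (hX : (q1 : ℤ) ^ α ∣ X) (hY : (q2 : ℤ) ^ β ∣ Y)
    (hK : Reg X Y ((q1 : ℤ) ^ α) ((q2 : ℤ) ^ β) ⊆ RegT c)
    (hnarrow : ∀ d ∈ S, (RegT d ∩ Reg X Y ((q1 : ℤ) ^ α) ((q2 : ℤ) ^ β)).Nonempty →
      X ≤ d.1 ∧ d.1 + d.2.2.1 ≤ X + (q1 : ℤ) ^ α) :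
    ∃ d ∈ S, Reg X Y ((q1 : ℤ) ^ α) ((q2 : ℤ) ^ β) ⊆ RegT d := by
  obtain ⟨e, v, heF, hv, hKR, hRc, hclosed⟩ :=
    hS.1.exists_closed_of_narrow hq1 hq2 hβ hX hY hK hnarrow
  have hR : IsAlignedPiece q1 q2 ((q1 : ℤ) ^ E) ((q2 : ℤ) ^ F) (X, v, (q1 : ℤ) ^ α, (q2 : ℤ) ^ e) :=
    ⟨α, e, rfl, rfl, hX, hv, pow_le_pow_right₀ (by exact_mod_cast hq1) hα,
      pow_le_pow_right₀ (by exact_mod_cast hq2.le) heF⟩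
  have hne : (Reg X v ((q1 : ℤ) ^ α) ((q2 : ℤ) ^ e)).Nonempty :=
    ⟨(X, v), mem_Reg.2 ⟨⟨le_rfl, by simp; positivity⟩, ⟨le_rfl, by simp; positivity⟩⟩⟩
  obtain ⟨d, hd, hRd⟩ := hS.exists_superset_of_closed hR hRc hne hclosed
  exact ⟨d, hd, hKR.trans hRd⟩

/-- `d₁` spans the block horizontally, so a piece spanning it vertically would cross `d₁`. -/
lemma GoodCut.narrow_rows_of_wide (hq1 : 0 < q1) (hq2 : 0 < q2) {W H : ℤ}
    (hS : GoodCut q1 q2 W H c S) {X Y : ℤ} {α β : ℕ} (hX : (q1 : ℤ) ^ α ∣ X) (hY : (q2 : ℤ) ^ β ∣ Y)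
    (hnone : ∀ d ∈ S, ¬ Reg X Y ((q1 : ℤ) ^ α) ((q2 : ℤ) ^ β) ⊆ RegT d) {d₁ : ℤ × ℤ × ℤ × ℤ}
    (hd₁ : d₁ ∈ S) (hmeet₁ : (RegT d₁ ∩ Reg X Y ((q1 : ℤ) ^ α) ((q2 : ℤ) ^ β)).Nonempty)
    (hwide₁ : ¬ (X ≤ d₁.1 ∧ d₁.1 + d₁.2.2.1 ≤ X + (q1 : ℤ) ^ α)) {d : ℤ × ℤ × ℤ × ℤ} (hd : d ∈ S)
    (hmeet : (RegT d ∩ Reg X Y ((q1 : ℤ) ^ α) ((q2 : ℤ) ^ β)).Nonempty) :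
    Y ≤ d.2.1 ∧ d.2.1 + d.2.2.2 ≤ Y + (q2 : ℤ) ^ β := by
  have hnotboth : ∀ d ∈ S, ¬ ((d.1 ≤ X ∧ X + (q1 : ℤ) ^ α ≤ d.1 + d.2.2.1) ∧
      (d.2.1 ≤ Y ∧ Y + (q2 : ℤ) ^ β ≤ d.2.1 + d.2.2.2)) := fun d hd h =>
    hnone d hd ((Reg_subset_iff (by positivity) (by positivity)).2 (by omega))
  have h₁ := hS.nested_of_meets hq1 hq2 hd₁ hX hY hmeet₁
  have hd₁x := h₁.1.resolve_left hwide₁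
  have hd₁y := h₁.2.resolve_right fun h => hnotboth d₁ hd₁ ⟨hd₁x, h⟩
  obtain ⟨hdx | hdx, hdy | hdy⟩ := hS.nested_of_meets hq1 hq2 hd hX hY hmeet
  · exact hdy
  · have hpos := (hS.aligned hd).pos hq1 hq2
    have hpos₁ := (hS.aligned hd₁).pos hq1 hq2
    have hcross : (RegT d ∩ RegT d₁).Nonempty :=
      (Reg_inter_nonempty_iff hpos.1 hpos.2 hpos₁.1 hpos₁.2).2 (by omega)
    exact absurd (hS.2.2.1 d hd d₁ hd₁ (fun h => hwide₁ (h ▸ hdx))) hcross.ne_empty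
  · exact hdy
  · exact absurd ⟨hdx, hdy⟩ (hnotboth d hd)

theorem SigmaCut.exists_superset_block (hq1 : 1 < q1) (hq2 : 1 < q2)
    (hS : SigmaCut q1 q2 ((q1 : ℤ) ^ E) ((q2 : ℤ) ^ F) c S) {X Y : ℤ} {α β : ℕ}
    (hα : α ≤ E) (hβ : β ≤ F) (hX : (q1 : ℤ) ^ α ∣ X) (hY : (q2 : ℤ) ^ β ∣ Y)
    (hK : Reg X Y ((q1 : ℤ) ^ α) ((q2 : ℤ) ^ β) ⊆ RegT c) :
    ∃ d ∈ S, Reg X Y ((q1 : ℤ) ^ α) ((q2 : ℤ) ^ β) ⊆ RegT d := by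
  by_contra! hnone
  have hq1' : 0 < q1 := by omega
  have hq2' : 0 < q2 := by omega
  by_cases hx : ∀ d ∈ S, (RegT d ∩ Reg X Y ((q1 : ℤ) ^ α) ((q2 : ℤ) ^ β)).Nonempty →
      X ≤ d.1 ∧ d.1 + d.2.2.1 ≤ X + (q1 : ℤ) ^ α
  · obtain ⟨d, hd, hKd⟩ := hS.exists_superset_block_of_narrow hq1' hq2 hα hβ hX hY hK hx
    exact hnone d hd hKd
  obtain ⟨d₁, hd₁, hmeet₁, hwide₁⟩ : ∃ d ∈ S,
      (RegT d ∩ Reg X Y ((q1 : ℤ) ^ α) ((q2 : ℤ) ^ β)).Nonempty ∧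
      ¬ (X ≤ d.1 ∧ d.1 + d.2.2.1 ≤ X + (q1 : ℤ) ^ α) := by
    simpa only [not_forall, exists_prop] using hx
  obtain ⟨_, ⟨d, hd, rfl⟩, hKd⟩ := hS.rectSwap.exists_superset_block_of_narrow hq2' hq1 hβ hα hY hX
    (by rw [RegT_rectSwap, ← image_swap_Reg]; exact Set.image_mono hK)
    (by
      rintro _ ⟨d, hd, rfl⟩ hmeet
      rw [RegT_rectSwap, ← image_swap_Reg, ← Set.image_inter Prod.swap_injective,
        Set.image_nonempty] at hmeet
      exact hS.1.narrow_rows_of_wide hq1' hq2' hX hY hnone hd₁ hmeet₁ hwide₁ hd hmeet)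
  rw [RegT_rectSwap, ← image_swap_Reg, Set.image_subset_image_iff Prod.swap_injective] at hKd
  exact hnone d hd hKd

end MinimalCut

section Refinement

variable {q1 q2 : ℕ} {W H : ℤ} {𝒞 : Set (ℤ × ℤ × ℤ × ℤ)} {cut : ℤ × ℤ × ℤ × ℤ → Set (ℤ × ℤ × ℤ × ℤ)}

lemma RegT_inter_eq_empty_of_goodCut (hcut : ∀ c ∈ 𝒞, GoodCut q1 q2 W H c (cut c))
    (h𝒞disj : ∀ c ∈ 𝒞, ∀ c' ∈ 𝒞, c ≠ c' → RegT c ∩ RegT c' = ∅) :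
    ∀ d ∈ ⋃ c ∈ 𝒞, cut c, ∀ d' ∈ ⋃ c ∈ 𝒞, cut c, d ≠ d' → RegT d ∩ RegT d' = ∅ := by
  intro d hd d' hd' hne
  obtain ⟨c, hc, hdc⟩ := Set.mem_iUnion₂.1 hd
  obtain ⟨c', hc', hdc'⟩ := Set.mem_iUnion₂.1 hd'
  by_cases hcc : c = c'
  · subst hcc
    exact (hcut c hc).2.2.1 d hdc d' hdc' hne
  · exact Set.subset_eq_empty (Set.inter_subset_inter ((hcut c hc).subset hdc)
      ((hcut c' hc').subset hdc')) (h𝒞disj c hc c' hc' hcc)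

lemma isAlignedPiece_of_mem_biUnion (hcut : ∀ c ∈ 𝒞, GoodCut q1 q2 W H c (cut c))
    {d : ℤ × ℤ × ℤ × ℤ} (hd : d ∈ ⋃ c ∈ 𝒞, cut c) : IsAlignedPiece q1 q2 W H d := by
  obtain ⟨c, hc, hdc⟩ := Set.mem_iUnion₂.1 hd
  exact (hcut c hc).aligned hdc

theorem IsSolution.of_sigmaCut (hq1 : 1 < q1) (hq2 : 1 < q2) {E F m : ℕ} {wB hB : Fin m → ℤ}
    (hreg : ∀ i, ∃ a b : ℕ, wB i = (q1 : ℤ) ^ a ∧ hB i = (q2 : ℤ) ^ b)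
    (hw : ∀ i, wB i ≤ (q1 : ℤ) ^ E) (hh : ∀ i, hB i ≤ (q2 : ℤ) ^ F)
    (hcut : ∀ c ∈ 𝒞, SigmaCut q1 q2 ((q1 : ℤ) ^ E) ((q2 : ℤ) ^ F) c (cut c))
    {x y : Fin m → ℤ} (hsol : IsSolution m wB hB 𝒞 x y) :
    IsSolution m wB hB (⋃ c ∈ 𝒞, cut c) x y := by
  refine ⟨hsol.1, hsol.2.1, fun i => ?_⟩
  obtain ⟨c, hc, hic⟩ := hsol.2.2 i
  obtain ⟨a, b, ha, hb⟩ := hreg i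
  have haE := (pow_le_pow_iff_right₀ (by exact_mod_cast hq1)).1 (ha ▸ hw i)
  have hbF := (pow_le_pow_iff_right₀ (by exact_mod_cast hq2)).1 (hb ▸ hh i)
  rw [ha, hb] at hic ⊢
  obtain ⟨d, hd, hid⟩ := (hcut c hc).exists_superset_block hq1 hq2 haE hbF
    (ha ▸ (hsol.1 i).1) (hb ▸ (hsol.1 i).2) hic
  exact ⟨d, Set.mem_biUnion hc hd, hid⟩

end Refinement

/-! ### Exchanging the contents of two boxes -/

section Exchange

variable {G : Type*} [AddGroup G] {R₁ R₂ : Set G} {δ p : G}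

open Classical in
noncomputable def exchange (R₁ R₂ : Set G) (δ : G) (p : G) : G :=
  if p ∈ R₂ then p - δ else if p ∈ R₁ then p + δ else p

open Classical in
noncomputable def exchangeShift (R₁ R₂ : Set G) (δ : G) (O : Set G) : G :=
  if O ⊆ R₂ then -δ else if O ⊆ R₁ then δ else 0

lemma exchange_of_mem_right (hp : p ∈ R₂) : exchange R₁ R₂ δ p = p - δ := if_pos hp

lemma exchange_of_mem_left (hdisj : Disjoint R₁ R₂) (hp : p ∈ R₁) :
    exchange R₁ R₂ δ p = p + δ := by
  rw [exchange, if_neg (hdisj.notMem_of_mem_left hp), if_pos hp]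

lemma exchange_of_notMem (h₁ : p ∉ R₁) (h₂ : p ∉ R₂) : exchange R₁ R₂ δ p = p := by
  rw [exchange, if_neg h₂, if_neg h₁]

lemma exchange_mem_left (hδ : ∀ p, p ∈ R₁ ↔ p + δ ∈ R₂) (hp : p ∈ R₂) :
    exchange R₁ R₂ δ p ∈ R₁ := by
  rw [exchange_of_mem_right hp, hδ, sub_add_cancel]
  exact hp

lemma exchange_mem_right (hδ : ∀ p, p ∈ R₁ ↔ p + δ ∈ R₂) (hdisj : Disjoint R₁ R₂)
    (hp : p ∈ R₁) : exchange R₁ R₂ δ p ∈ R₂ := by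
  rw [exchange_of_mem_left hdisj hp]
  exact (hδ p).1 hp

lemma exchange_involutive (hδ : ∀ p, p ∈ R₁ ↔ p + δ ∈ R₂) (hdisj : Disjoint R₁ R₂) :
    Function.Involutive (exchange R₁ R₂ δ) := by
  intro p
  by_cases h₂ : p ∈ R₂
  · have h₁ : p - δ ∈ R₁ := (hδ _).2 (by rwa [sub_add_cancel])
    rw [exchange_of_mem_right h₂, exchange_of_mem_left hdisj h₁, sub_add_cancel]
  · by_cases h₁ : p ∈ R₁
    · rw [exchange_of_mem_left hdisj h₁, exchange_of_mem_right ((hδ p).1 h₁), add_sub_cancel_right]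
    · rw [exchange_of_notMem h₁ h₂, exchange_of_notMem h₁ h₂]

lemma image_exchange (hdisj : Disjoint R₁ R₂) {O : Set G}
    (hO : O ⊆ R₁ ∨ O ⊆ R₂ ∨ Disjoint O (R₁ ∪ R₂)) :
    exchange R₁ R₂ δ '' O = (· + exchangeShift R₁ R₂ δ O) '' O := by
  refine Set.image_congr fun p hp => ?_
  unfold exchangeShift
  split_ifs with h h'
  · rw [exchange_of_mem_right (h hp), sub_eq_add_neg]
  · exact exchange_of_mem_left hdisj (h' hp)
  · have hp' := ((hO.resolve_left h').resolve_left h).notMem_of_mem_left hp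
    rw [add_zero, exchange_of_notMem (fun h => hp' (.inl h)) (fun h => hp' (.inr h))]

end Exchange

/-- Every block is moved by the same involution of the plane, which keeps the blocks disjoint. -/
theorem IsSolution.exists_exchange {m : ℕ} {wB hB : Fin m → ℤ} {𝒟 : Set (ℤ × ℤ × ℤ × ℤ)}
    {x y : Fin m → ℤ} (hsol : IsSolution m wB hB 𝒟 x y) {X₁ Y₁ X₂ Y₂ W H : ℤ}
    (hdisj : Disjoint (Reg X₁ Y₁ W H) (Reg X₂ Y₂ W H))
    (h₁ : ∃ d ∈ 𝒟, Reg X₁ Y₁ W H ⊆ RegT d) (h₂ : ∃ d ∈ 𝒟, Reg X₂ Y₂ W H ⊆ RegT d)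
    (hsep : ∀ i, Reg (x i) (y i) (wB i) (hB i) ⊆ Reg X₁ Y₁ W H ∨
      Reg (x i) (y i) (wB i) (hB i) ⊆ Reg X₂ Y₂ W H ∨
      Disjoint (Reg (x i) (y i) (wB i) (hB i)) (Reg X₁ Y₁ W H ∪ Reg X₂ Y₂ W H))
    (hdvd : ∀ i, (Reg (x i) (y i) (wB i) (hB i) ⊆ Reg X₁ Y₁ W H ∨
      Reg (x i) (y i) (wB i) (hB i) ⊆ Reg X₂ Y₂ W H) → wB i ∣ X₂ - X₁ ∧ hB i ∣ Y₂ - Y₁) :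
    ∃ x' y', IsSolution m wB hB 𝒟 x' y' ∧ ∀ i, Reg (x i) (y i) (wB i) (hB i) ⊆ Reg X₂ Y₂ W H →
      x' i = x i - (X₂ - X₁) ∧ y' i = y i - (Y₂ - Y₁) := by
  obtain ⟨hal, hdis, hcont⟩ := hsol
  set R₁ := Reg X₁ Y₁ W H
  set R₂ := Reg X₂ Y₂ W H
  set δ : ℤ × ℤ := (X₂ - X₁, Y₂ - Y₁)
  have hδ : ∀ p, p ∈ R₁ ↔ p + δ ∈ R₂ := fun p => by
    simp only [R₁, R₂, δ, mem_Reg, Prod.fst_add, Prod.snd_add]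
    omega
  set s := fun i => exchangeShift R₁ R₂ δ (Reg (x i) (y i) (wB i) (hB i))
  have hs : ∀ i, wB i ∣ (s i).1 ∧ hB i ∣ (s i).2 := fun i => by
    simp only [s, exchangeShift]
    split_ifs with h h'
    · exact ⟨dvd_neg.2 (hdvd i (.inr h)).1, dvd_neg.2 (hdvd i (.inr h)).2⟩
    · exact hdvd i (.inl h')
    · exact ⟨dvd_zero _, dvd_zero _⟩
  have himage : ∀ i, Reg (x i + (s i).1) (y i + (s i).2) (wB i) (hB i) =
      exchange R₁ R₂ δ '' Reg (x i) (y i) (wB i) (hB i) := fun i => by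
    rw [image_exchange hdisj (hsep i), image_add_Reg]
  refine ⟨fun i => x i + (s i).1, fun i => y i + (s i).2,
    ⟨fun i => ⟨dvd_add (hal i).1 (hs i).1, dvd_add (hal i).2 (hs i).2⟩, fun i j hij => ?_,
      fun i => ?_⟩, fun i h => ?_⟩
  · rw [himage, himage, ← Set.image_inter (exchange_involutive hδ hdisj).injective, hdis i j hij,
      Set.image_empty]
  · rw [himage]
    rcases hsep i with h | h | h
    · obtain ⟨d, hd, hR⟩ := h₂
      exact ⟨d, hd,
        (Set.image_subset_iff.2 fun p hp => exchange_mem_right hδ hdisj (h hp)).trans hR⟩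
    · obtain ⟨d, hd, hR⟩ := h₁
      exact ⟨d, hd, (Set.image_subset_iff.2 fun p hp => exchange_mem_left hδ (h hp)).trans hR⟩
    · obtain ⟨d, hd, hO⟩ := hcont i
      refine ⟨d, hd, ?_⟩
      rintro _ ⟨p, hp, rfl⟩
      have hp' := h.notMem_of_mem_left hp
      rw [exchange_of_notMem (fun h => hp' (.inl h)) (fun h => hp' (.inr h))]
      exact hO hp
  · simp only [s, exchangeShift, if_pos h, δ, Prod.fst_neg, Prod.snd_neg, ← sub_eq_add_neg,
      and_self]

/-! ### Moving the largest block to the corner of `C*` -/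

section MoveLargest

variable {q2 m : ℕ} {wB hB : Fin (m + 1) → ℤ} {𝒟 : Set (ℤ × ℤ × ℤ × ℤ)} {x y : Fin (m + 1) → ℤ}

lemma IsSolution.rows_disjoint_of_spans (hsol : IsSolution (m + 1) wB hB 𝒟 x y)
    (hpos : ∀ i, 0 < wB i ∧ 0 < hB i) {P : ℤ × ℤ × ℤ × ℤ} {i j : Fin (m + 1)} (hij : i ≠ j)
    (hiP : Reg (x i) (y i) (wB i) (hB i) ⊆ RegT P) (hjP : Reg (x j) (y j) (wB j) (hB j) ⊆ RegT P)
    (hPw : P.2.2.1 ≤ wB j) :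
    y i + hB i ≤ y j ∨ y j + hB j ≤ y i := by
  have := (Reg_subset_iff (hpos i).1 (hpos i).2).1 hiP
  have := (Reg_subset_iff (hpos j).1 (hpos j).2).1 hjP
  have := (Reg_inter_eq_empty_iff (hpos i).1 (hpos i).2 (hpos j).1 (hpos j).2).1 (hsol.2.1 i j hij)
  have := hpos i
  omega

lemma IsSolution.subset_or_disjoint_or_crosses (hq2 : 0 < q2)
    (hsol : IsSolution (m + 1) wB hB 𝒟 x y) (hpos : ∀ i, 0 < wB i ∧ 0 < hB i)
    (hheight : ∀ i, ∃ b : ℕ, hB i = (q2 : ℤ) ^ b)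
    (h𝒟disj : ∀ c ∈ 𝒟, ∀ c' ∈ 𝒟, c ≠ c' → RegT c ∩ RegT c' = ∅)
    {P : ℤ × ℤ × ℤ × ℤ} (hP : P ∈ 𝒟) {v W : ℤ} {s : ℕ} (hv : (q2 : ℤ) ^ s ∣ v)
    (hPW : P.2.2.1 ≤ W) (hR : Reg P.1 v W ((q2 : ℤ) ^ s) ⊆ RegT P) (i : Fin (m + 1)) :
    Reg (x i) (y i) (wB i) (hB i) ⊆ Reg P.1 v W ((q2 : ℤ) ^ s) ∨
      Disjoint (Reg (x i) (y i) (wB i) (hB i)) (Reg P.1 v W ((q2 : ℤ) ^ s)) ∨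
      (Reg (x i) (y i) (wB i) (hB i) ⊆ RegT P ∧ (q2 : ℤ) ^ (s + 1) ∣ hB i ∧
        y i ≤ v ∧ v + (q2 : ℤ) ^ s ≤ y i + hB i) := by
  obtain ⟨d, hd, hid⟩ := hsol.2.2 i
  by_cases hdP : d = P
  swap
  · exact .inr (.inl (disjoint_of_subset_RegT h𝒟disj hd hP hdP hid hR))
  rw [hdP] at hid
  obtain ⟨b, hb⟩ := hheight i
  have hi := (Reg_subset_iff (hpos i).1 (hpos i).2).1 hid
  rcases Reg_subset_or_disjoint_or_crosses hq2 hv hb (hsol.1 i).2 (hpos i).1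
    (x' := x i) (X := P.1) (W := W) (by omega) with h | h | h
  · exact .inl h
  · exact .inr (.inl h)
  · exact .inr (.inr ⟨hid, hb ▸ pow_dvd_pow _ h.1, h.2⟩)

/-- A block crossing the slab vertically would overlap block `0`, which spans `P`. -/
lemma IsSolution.subset_or_disjoint_of_block_subset (hq2 : 0 < q2)
    (hsol : IsSolution (m + 1) wB hB 𝒟 x y) (hpos : ∀ i, 0 < wB i ∧ 0 < hB i)
    (hheight : ∀ i, ∃ b : ℕ, hB i = (q2 : ℤ) ^ b)
    (h𝒟disj : ∀ c ∈ 𝒟, ∀ c' ∈ 𝒟, c ≠ c' → RegT c ∩ RegT c' = ∅)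
    {P : ℤ × ℤ × ℤ × ℤ} (hP : P ∈ 𝒟) (h0P : Reg (x 0) (y 0) (wB 0) (hB 0) ⊆ RegT P)
    (hPw : P.2.2.1 ≤ wB 0) {v : ℤ} {s : ℕ} (hv : (q2 : ℤ) ^ s ∣ v)
    (hR : Reg P.1 v (wB 0) ((q2 : ℤ) ^ s) ⊆ RegT P)
    (h0R : Reg (x 0) (y 0) (wB 0) (hB 0) ⊆ Reg P.1 v (wB 0) ((q2 : ℤ) ^ s)) (i : Fin (m + 1)) :
    Reg (x i) (y i) (wB i) (hB i) ⊆ Reg P.1 v (wB 0) ((q2 : ℤ) ^ s) ∨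
      Disjoint (Reg (x i) (y i) (wB i) (hB i)) (Reg P.1 v (wB 0) ((q2 : ℤ) ^ s)) := by
  rcases eq_or_ne i 0 with rfl | hi0
  · exact .inl h0R
  rcases hsol.subset_or_disjoint_or_crosses hq2 hpos hheight h𝒟disj hP hv hPw hR i
    with h | h | ⟨hiP, -, h⟩
  · exact .inl h
  · exact .inr h
  · have := hsol.rows_disjoint_of_spans hpos hi0 hiP h0P hPw
    have := (Reg_subset_iff (hpos 0).1 (hpos 0).2).1 h0R
    have := hpos 0
    omega

/-- Block `0` spans its container `P`; exchanging the contents of `C*` with the aligned slab of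
`P` of the height of `C*` around block `0` moves block `0` into `C*`. -/
theorem IsSolution.exists_block_subset_of_minimal (hq2 : 1 < q2)
    (hsol : IsSolution (m + 1) wB hB 𝒟 x y) (hpos : ∀ i, 0 < wB i ∧ 0 < hB i)
    (hheight : ∀ i, ∃ b : ℕ, hB i = (q2 : ℤ) ^ b) (hwdvd : ∀ i, wB i ∣ wB 0)
    (h𝒟 : ∀ d ∈ 𝒟, (∃ b : ℕ, d.2.2.2 = (q2 : ℤ) ^ b) ∧ d.2.2.1 ∣ d.1 ∧ d.2.2.2 ∣ d.2.1 ∧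
      d.2.2.1 ≤ wB 0)
    (h𝒟disj : ∀ c ∈ 𝒟, ∀ c' ∈ 𝒟, c ≠ c' → RegT c ∩ RegT c' = ∅)
    {cstar : ℤ × ℤ × ℤ × ℤ} (hcstar : cstar ∈ 𝒟) (hcw : cstar.2.2.1 = wB 0)
    (hch : hB 0 ≤ cstar.2.2.2)
    (hmin : ∀ d ∈ 𝒟, wB 0 ≤ d.2.2.1 → hB 0 ≤ d.2.2.2 → cstar.2.2.2 ≤ d.2.2.2) :
    ∃ x' y', IsSolution (m + 1) wB hB 𝒟 x' y' ∧
      Reg (x' 0) (y' 0) (wB 0) (hB 0) ⊆ RegT cstar := by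
  obtain ⟨P, hP, h0P⟩ := hsol.2.2 0
  by_cases hPc : P = cstar
  · exact ⟨x, y, hsol, hPc ▸ h0P⟩
  have hq2' : (1 : ℤ) < q2 := by exact_mod_cast hq2
  obtain ⟨⟨bP, hbP⟩, hPx, hPy, hPw⟩ := h𝒟 P hP
  obtain ⟨⟨c, hc⟩, hcx, hcy, -⟩ := h𝒟 cstar hcstar
  obtain ⟨f, hf⟩ := hheight 0
  have h0 := (Reg_subset_iff (hpos 0).1 (hpos 0).2).1 h0P
  have hPw' : P.2.2.1 = wB 0 := le_antisymm hPw (by omega)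
  have hcP : c ≤ bP := (pow_le_pow_iff_right₀ hq2').1 (hc ▸ hbP ▸ hmin P hP (by omega) (by omega))
  obtain ⟨z, hz, hzP⟩ := exists_pow_dvd_between (by omega) ((pow_le_pow_iff_right₀ hq2').1
    (hf ▸ hc ▸ hch)) hcP (hf ▸ (hsol.1 0).2) (hbP ▸ hPy) h0.2.2.1 (by rw [← hf, ← hbP]; omega)
  set R₁ := Reg cstar.1 cstar.2.1 (wB 0) ((q2 : ℤ) ^ c)
  set R₂ := Reg P.1 z (wB 0) ((q2 : ℤ) ^ c)
  have hR₁ : R₁ = RegT cstar := by rw [RegT_eq, hcw, hc]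
  have hR₂ : R₂ ⊆ RegT P := by
    rw [RegT_eq, Reg_subset_iff (hpos 0).1 (by positivity), hPw', hbP]
    omega
  have h0R₂ : Reg (x 0) (y 0) (wB 0) (hB 0) ⊆ R₂ := by
    rw [Reg_subset_iff (hpos 0).1 (hpos 0).2, hf]
    omega
  obtain ⟨x', y', hsol', hmove⟩ := hsol.exists_exchange
    (disjoint_of_subset_RegT h𝒟disj hcstar hP (Ne.symm hPc) hR₁.le hR₂)
    ⟨cstar, hcstar, hR₁.le⟩ ⟨P, hP, hR₂⟩ (fun i => by
      obtain ⟨d, hd, hid⟩ := hsol.2.2 i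
      by_cases hdc : d = cstar
      · exact .inl ((hdc ▸ hid).trans hR₁.ge)
      refine .inr ((hsol.subset_or_disjoint_of_block_subset (by omega) hpos hheight h𝒟disj hP h0P
        hPw hz hR₂ h0R₂ i).imp_right fun h => Set.disjoint_union_right.2
          ⟨disjoint_of_subset_RegT h𝒟disj hd hcstar hdc hid hR₁.le, h⟩))
    fun i hi => by
      obtain ⟨b, hb⟩ := hheight i
      refine ⟨dvd_sub ((hwdvd i).trans (hPw' ▸ hPx)) ((hwdvd i).trans (hcw ▸ hcx)), ?_⟩
      exact (hi.elim (pow_dvd_of_Reg_subset hq2 hb (hpos i).1)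
        (pow_dvd_of_Reg_subset hq2 hb (hpos i).1)).trans (dvd_sub hz (hc ▸ hcy))
  obtain ⟨hx', hy'⟩ := hmove 0 h0R₂
  refine ⟨x', y', hsol', ?_⟩
  rw [hx', hy', RegT_eq, Reg_subset_iff (hpos 0).1 (hpos 0).2, hcw, hc]
  omega

/-- With `q2 ^ s` the exact power of `q2` dividing the offset of block `0` in `C*`, exchanging
the two slabs of height `q2 ^ s` meeting at block `0` lowers it. -/
lemma IsSolution.exists_lower (hq2 : 1 < q2)
    (hsol : IsSolution (m + 1) wB hB 𝒟 x y) (hpos : ∀ i, 0 < wB i ∧ 0 < hB i)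
    (hheight : ∀ i, ∃ b : ℕ, hB i = (q2 : ℤ) ^ b)
    (h𝒟disj : ∀ c ∈ 𝒟, ∀ c' ∈ 𝒟, c ≠ c' → RegT c ∩ RegT c' = ∅)
    {cstar : ℤ × ℤ × ℤ × ℤ} (hcstar : cstar ∈ 𝒟) (hcw : cstar.2.2.1 = wB 0) {c : ℕ}
    (hc : cstar.2.2.2 = (q2 : ℤ) ^ c) (hcy : cstar.2.2.2 ∣ cstar.2.1)
    (h0 : Reg (x 0) (y 0) (wB 0) (hB 0) ⊆ RegT cstar) (hlow : cstar.2.1 < y 0) :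
    ∃ x' y', IsSolution (m + 1) wB hB 𝒟 x' y' ∧
      Reg (x' 0) (y' 0) (wB 0) (hB 0) ⊆ RegT cstar ∧ y' 0 < y 0 := by
  obtain ⟨f, hf⟩ := hheight 0
  have h0c := (Reg_subset_iff (hpos 0).1 (hpos 0).2).1 h0
  have h0pos := hpos 0
  obtain ⟨s, hfs, hcs, hs0, hs0', hlo, hhi⟩ := exists_exact_pow_dvd_between hq2 (hc ▸ hcy)
    (hf ▸ (hsol.1 0).2) ((pow_le_pow_iff_right₀ (a := (q2 : ℤ)) (by exact_mod_cast hq2)).1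
      (by rw [← hf, ← hc]; omega)) hlow (by rw [← hf, ← hc]; omega)
  have hqs : (0 : ℤ) < (q2 : ℤ) ^ s := by positivity
  set R₁ := Reg cstar.1 (y 0 - (q2 : ℤ) ^ s) (wB 0) ((q2 : ℤ) ^ s)
  set R₂ := Reg cstar.1 (y 0) (wB 0) ((q2 : ℤ) ^ s)
  have hR₁ : R₁ ⊆ RegT cstar := by
    rw [RegT_eq, Reg_subset_iff h0pos.1 hqs, hcw, hc]
    omega
  have hR₂ : R₂ ⊆ RegT cstar := by
    rw [RegT_eq, Reg_subset_iff h0pos.1 hqs, hcw, hc]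
    omega
  have h0R₂ : Reg (x 0) (y 0) (wB 0) (hB 0) ⊆ R₂ := by
    have := pow_le_pow_right₀ (by exact_mod_cast hq2.le : (1 : ℤ) ≤ q2) hfs
    rw [Reg_subset_iff h0pos.1 h0pos.2]
    omega
  have hsep : ∀ i, Reg (x i) (y i) (wB i) (hB i) ⊆ R₁ ∨ Reg (x i) (y i) (wB i) (hB i) ⊆ R₂ ∨
      Disjoint (Reg (x i) (y i) (wB i) (hB i)) (R₁ ∪ R₂) := by
    intro i
    rcases eq_or_ne i 0 with rfl | hi0
    · exact .inr (.inl h0R₂)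
    rcases hsol.subset_or_disjoint_of_block_subset (by omega) hpos hheight h𝒟disj hcstar h0 hcw.le
      hs0 hR₂ h0R₂ i with h₂ | h₂
    · exact .inr (.inl h₂)
    rcases hsol.subset_or_disjoint_or_crosses (by omega) hpos hheight h𝒟disj hcstar
      (dvd_sub hs0 dvd_rfl) hcw.le hR₁ i with h₁ | h₁ | ⟨hic, hdvd, h₁⟩
    · exact .inl h₁
    · exact .inr (.inr (Set.disjoint_union_right.2 ⟨h₁, h₂⟩))
    · -- a taller block crossing `R₁` ends at `y 0`, which `q2 ^ (s + 1)` does not divide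
      have hyi : y i + hB i = y 0 := by
        have := hsol.rows_disjoint_of_spans hpos hi0 hic h0 hcw.le
        omega
      exact absurd (hyi ▸ dvd_add (hdvd.trans (hsol.1 i).2) hdvd) hs0'
  obtain ⟨x', y', hsol', hmove⟩ := hsol.exists_exchange
    (Set.disjoint_iff_inter_eq_empty.2 ((Reg_inter_eq_empty_iff h0pos.1 hqs h0pos.1 hqs).2
      (by omega))) ⟨cstar, hcstar, hR₁⟩ ⟨cstar, hcstar, hR₂⟩ hsep fun i hi => by
      obtain ⟨b, hb⟩ := hheight i
      rw [sub_self, sub_sub_cancel]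
      exact ⟨dvd_zero _, hi.elim (pow_dvd_of_Reg_subset hq2 hb (hpos i).1)
        (pow_dvd_of_Reg_subset hq2 hb (hpos i).1)⟩
  obtain ⟨hx', hy'⟩ := hmove 0 h0R₂
  refine ⟨x', y', hsol', ?_, by omega⟩
  rw [hx', hy', RegT_eq, Reg_subset_iff h0pos.1 h0pos.2]
  omega

theorem IsSolution.exists_block_corner (hq2 : 1 < q2)
    (hsol : IsSolution (m + 1) wB hB 𝒟 x y) (hpos : ∀ i, 0 < wB i ∧ 0 < hB i)
    (hheight : ∀ i, ∃ b : ℕ, hB i = (q2 : ℤ) ^ b)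
    (h𝒟disj : ∀ c ∈ 𝒟, ∀ c' ∈ 𝒟, c ≠ c' → RegT c ∩ RegT c' = ∅)
    {cstar : ℤ × ℤ × ℤ × ℤ} (hcstar : cstar ∈ 𝒟) (hcw : cstar.2.2.1 = wB 0) {c : ℕ}
    (hc : cstar.2.2.2 = (q2 : ℤ) ^ c) (hcy : cstar.2.2.2 ∣ cstar.2.1)
    (h0 : Reg (x 0) (y 0) (wB 0) (hB 0) ⊆ RegT cstar) :
    ∃ x' y', IsSolution (m + 1) wB hB 𝒟 x' y' ∧ x' 0 = cstar.1 ∧ y' 0 = cstar.2.1 := by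
  induction hn : (y 0 - cstar.2.1).toNat using Nat.strong_induction_on generalizing x y with
  | _ n ih =>
    have h0c := (Reg_subset_iff (hpos 0).1 (hpos 0).2).1 h0
    rcases h0c.2.2.1.eq_or_lt with heq | hlt
    · exact ⟨x, y, hsol, by omega, heq.symm⟩
    obtain ⟨x', y', hsol', h0', hlow⟩ :=
      hsol.exists_lower hq2 hpos hheight h𝒟disj hcstar hcw hc hcy h0 hlt
    have h0c' := (Reg_subset_iff (hpos 0).1 (hpos 0).2).1 h0'
    exact ih _ (by omega) hsol' h0' rfl

end MoveLargest

section Orientation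

variable {q1 q2 m : ℕ} {wB hB : Fin (m + 1) → ℤ} {𝒟 : Set (ℤ × ℤ × ℤ × ℤ)}
  {x y : Fin (m + 1) → ℤ}

theorem IsSolution.exists_corner_of_wide (hq1 : 1 < q1) (hq2 : 1 < q2)
    (hsol : IsSolution (m + 1) wB hB 𝒟 x y)
    (hreg : ∀ i, ∃ a b : ℕ, wB i = (q1 : ℤ) ^ a ∧ hB i = (q2 : ℤ) ^ b)
    (hwide : ∀ i, wB i ≤ wB 0) {H : ℤ} (h𝒟 : ∀ d ∈ 𝒟, IsAlignedPiece q1 q2 (wB 0) H d)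
    (h𝒟disj : ∀ c ∈ 𝒟, ∀ c' ∈ 𝒟, c ≠ c' → RegT c ∩ RegT c' = ∅)
    {cstar : ℤ × ℤ × ℤ × ℤ} (hcstar : cstar ∈ 𝒟) (hfit : wB 0 ≤ cstar.2.2.1 ∧ hB 0 ≤ cstar.2.2.2)
    (hmin : ∀ d ∈ 𝒟, wB 0 ≤ d.2.2.1 → hB 0 ≤ d.2.2.2 → cstar.2.2.2 ≤ d.2.2.2) :
    ∃ x' y', IsSolution (m + 1) wB hB 𝒟 x' y' ∧ x' 0 = cstar.1 ∧ y' 0 = cstar.2.1 := by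
  have hpos : ∀ i, 0 < wB i ∧ 0 < hB i := fun i => by
    obtain ⟨a, b, ha, hb⟩ := hreg i
    exact ⟨ha ▸ by positivity, hb ▸ by positivity⟩
  have hwdvd : ∀ i, wB i ∣ wB 0 := fun i => by
    obtain ⟨a, -, ha, -⟩ := hreg i
    obtain ⟨a₀, -, ha₀, -⟩ := hreg 0
    have h := hwide i
    rw [ha, ha₀] at h ⊢
    exact pow_dvd_pow _ ((pow_le_pow_iff_right₀ (by exact_mod_cast hq1)).1 h)
  have hheight : ∀ i, ∃ b : ℕ, hB i = (q2 : ℤ) ^ b := fun i => by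
    obtain ⟨-, b, -, hb⟩ := hreg i
    exact ⟨b, hb⟩
  obtain ⟨-, c, -, hc, -, hcy, hcw, -⟩ := h𝒟 cstar hcstar
  obtain ⟨x₁, y₁, hsol₁, h₁⟩ := hsol.exists_block_subset_of_minimal hq2 hpos hheight hwdvd
    (fun d hd => by
      obtain ⟨-, b, -, hb, hx, hy, hw, -⟩ := h𝒟 d hd
      exact ⟨⟨b, hb⟩, hx, hy, hw⟩)
    h𝒟disj hcstar (le_antisymm hcw hfit.1) hfit.2 hmin
  exact hsol₁.exists_block_corner hq2 hpos hheight h𝒟disj hcstar (le_antisymm hcw hfit.1) hc hcy h₁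

theorem IsSolution.exists_corner_of_tall (hq1 : 1 < q1) (hq2 : 1 < q2)
    (hsol : IsSolution (m + 1) wB hB 𝒟 x y)
    (hreg : ∀ i, ∃ a b : ℕ, wB i = (q1 : ℤ) ^ a ∧ hB i = (q2 : ℤ) ^ b)
    (htall : ∀ i, hB i ≤ hB 0) {W : ℤ} (h𝒟 : ∀ d ∈ 𝒟, IsAlignedPiece q1 q2 W (hB 0) d)
    (h𝒟disj : ∀ c ∈ 𝒟, ∀ c' ∈ 𝒟, c ≠ c' → RegT c ∩ RegT c' = ∅)
    {cstar : ℤ × ℤ × ℤ × ℤ} (hcstar : cstar ∈ 𝒟) (hfit : wB 0 ≤ cstar.2.2.1 ∧ hB 0 ≤ cstar.2.2.2)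
    (hmin : ∀ d ∈ 𝒟, wB 0 ≤ d.2.2.1 → hB 0 ≤ d.2.2.2 → cstar.2.2.1 ≤ d.2.2.1) :
    ∃ x' y', IsSolution (m + 1) wB hB 𝒟 x' y' ∧ x' 0 = cstar.1 ∧ y' 0 = cstar.2.1 := by
  obtain ⟨y', x', hsol', hy, hx⟩ := hsol.rectSwap.exists_corner_of_wide hq2 hq1
    (fun i => let ⟨a, b, ha, hb⟩ := hreg i; ⟨b, a, hb, ha⟩) htall
    (by rintro _ ⟨d, hd, rfl⟩; exact (h𝒟 d hd).rectSwap)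
    (RegT_inter_rectSwap_eq_empty h𝒟disj) (Set.mem_image_of_mem _ hcstar) ⟨hfit.2, hfit.1⟩
    (by rintro _ ⟨d, hd, rfl⟩ h₁ h₂; exact hmin d hd h₂ h₁)
  exact ⟨x', y', by simpa only [image_rectSwap_image_rectSwap] using hsol'.rectSwap, hx, hy⟩

end Orientation

lemma sizeLE.max_le {s t : ℤ × ℤ} (h : sizeLE s t) : max s.1 s.2 ≤ max t.1 t.2 := by
  rcases h with rfl | h | h | h
  · exact le_rfl
  · exact h.le
  · exact h.1.le
  · exact h.1.le

lemma sizeLE.snd_le_of_fst_eq {s t : ℤ × ℤ} (h : sizeLE s t) (h₁ : s.1 = t.1) : s.2 ≤ t.2 := by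
  rcases h with rfl | h | h | h
  · exact le_rfl
  · by_contra! h₂
    exact h.not_ge (max_le_max h₁.ge h₂.le)
  · exact absurd h.2 h₁.not_lt
  · exact h.2.2.le

lemma sizeLE.fst_le_of_snd_eq {s t : ℤ × ℤ} (h : sizeLE s t) (h₂ : s.2 = t.2) : s.1 ≤ t.1 := by
  rcases h with rfl | h | h | h
  · exact le_rfl
  · by_contra! h₁
    exact h.not_ge (max_le_max h₁.le h₂.ge)
  · exact h.2.le
  · exact h.2.1.le

lemma IsGreatest.eq_of_max_le {m : ℕ} {w h : Fin (m + 1) → ℤ} {s : ℤ}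
    (hs : IsGreatest (Set.range w) s) (hmax : ∀ i, max (w i) (h i) ≤ max (w 0) (h 0))
    (hhw : h 0 ≤ w 0) : s = w 0 := by
  obtain ⟨i, rfl⟩ := hs.1
  refine le_antisymm ?_ (hs.2 ⟨0, rfl⟩)
  have := hmax i
  rw [max_eq_left hhw] at this
  exact (le_max_left _ _).trans this

lemma IsGreatest.exists_eq_pow {m q : ℕ} {w : Fin m → ℤ} {s : ℤ} (hs : IsGreatest (Set.range w) s)
    (hw : ∀ i, ∃ a : ℕ, w i = (q : ℤ) ^ a) : ∃ a : ℕ, s = (q : ℤ) ^ a := by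
  obtain ⟨i, rfl⟩ := hs.1
  exact hw i

theorem stmt12_general (q1 q2 : ℕ) (hq1 : 1 < q1) (hq2 : 1 < q2)
    (m : ℕ) (wB hB : Fin (m + 1) → ℤ)
    (hBreg : ∀ i, ∃ a b : ℕ, wB i = (q1 : ℤ) ^ a ∧ hB i = (q2 : ℤ) ^ b)
    (hsorted : ∀ i j : Fin (m + 1), i ≤ j → sizeLE (wB j, hB j) (wB i, hB i))
    (𝒞 : Set (ℤ × ℤ × ℤ × ℤ))
    (h𝒞disj : ∀ c ∈ 𝒞, ∀ c' ∈ 𝒞, c ≠ c' → RegT c ∩ RegT c' = ∅)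
    (hsol : ∃ x y, IsSolution (m + 1) wB hB 𝒞 x y)
    (sw sh : ℤ)
    (hsw : IsGreatest (Set.range wB) sw) (hsh : IsGreatest (Set.range hB) sh)
    (cut : (ℤ × ℤ × ℤ × ℤ) → Set (ℤ × ℤ × ℤ × ℤ))
    (hcut : ∀ c ∈ 𝒞, SigmaCut q1 q2 sw sh c (cut c))
    (𝒞σ : Set (ℤ × ℤ × ℤ × ℤ)) (h𝒞σ : 𝒞σ = ⋃ c ∈ 𝒞, cut c)
    (cstar : ℤ × ℤ × ℤ × ℤ) (hcstar : cstar ∈ 𝒞σ)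
    (hfit : wB 0 ≤ cstar.2.2.1 ∧ hB 0 ≤ cstar.2.2.2)
    (hminimal : ∀ c ∈ 𝒞σ, wB 0 ≤ c.2.2.1 → hB 0 ≤ c.2.2.2 →
      sizeLE (cstar.2.2.1, cstar.2.2.2) (c.2.2.1, c.2.2.2)) :
    ∃ x y, IsSolution (m + 1) wB hB 𝒞σ x y ∧ x 0 = cstar.1 ∧ y 0 = cstar.2.1 := by
  obtain ⟨x, y, hsol⟩ := hsol
  obtain ⟨E, rfl⟩ := hsw.exists_eq_pow fun i => (hBreg i).imp fun _ ⟨_, ha, _⟩ => ha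
  obtain ⟨F, rfl⟩ := hsh.exists_eq_pow fun i => let ⟨_, b, _, hb⟩ := hBreg i; ⟨b, hb⟩
  subst h𝒞σ
  have hpieces := fun d (hd : d ∈ ⋃ c ∈ 𝒞, cut c) =>
    isAlignedPiece_of_mem_biUnion (fun c hc => (hcut c hc).1) hd
  have hdisj := RegT_inter_eq_empty_of_goodCut (fun c hc => (hcut c hc).1) h𝒞disj
  have hsolσ := hsol.of_sigmaCut hq1 hq2 hBreg (fun i => hsw.2 ⟨i, rfl⟩) (fun i => hsh.2 ⟨i, rfl⟩)
    hcut
  have hmax : ∀ i, max (wB i) (hB i) ≤ max (wB 0) (hB 0) :=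
    fun i => (hsorted 0 i (Fin.zero_le i)).max_le
  rcases le_total (hB 0) (wB 0) with hwide | htall
  · rw [hsw.eq_of_max_le hmax hwide] at hpieces hsw
    exact hsolσ.exists_corner_of_wide hq1 hq2 hBreg (fun i => hsw.2 ⟨i, rfl⟩) hpieces hdisj hcstar
      hfit fun d hd h₁ h₂ => (hminimal d hd h₁ h₂).snd_le_of_fst_eq
        ((le_antisymm (hpieces cstar hcstar).width_le hfit.1).trans
          (le_antisymm (hpieces d hd).width_le h₁).symm)
  · rw [hsh.eq_of_max_le (fun i => by simpa only [max_comm] using hmax i) htall] at hpieces hsh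
    exact hsolσ.exists_corner_of_tall hq1 hq2 hBreg (fun i => hsh.2 ⟨i, rfl⟩) hpieces hdisj hcstar
      hfit fun d hd h₁ h₂ => (hminimal d hd h₁ h₂).fst_le_of_snd_eq
        ((le_antisymm (hpieces cstar hcstar).height_le hfit.2).trans
          (le_antisymm (hpieces d hd).height_le h₂).symm)

/-- greedy step correctness: if `(B,𝒞)` has a solution, `B1` is the
largest block, `ŝ` is the least size dominating all block sizes, and `C*` is a
size-minimal container among those of `σ(𝒞,ŝ)` large enough to contain `B1`, then
there is a solution (to the cut problem, equivalently to `(B,𝒞)`) in which `B1`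
is placed at the lower-left corner of `C*`. -/
theorem stmt12 (q1 q2 : ℕ) (hq1 : 1 < q1) (hq2 : 1 < q2)
    (m : ℕ) (wB hB : Fin (m + 1) → ℤ)
    (hBreg : ∀ i, ∃ a b : ℕ, wB i = (q1 : ℤ) ^ a ∧ hB i = (q2 : ℤ) ^ b)
    (hsorted : ∀ i j : Fin (m + 1), i ≤ j → sizeLE (wB j, hB j) (wB i, hB i))
    (𝒞 : Set (ℤ × ℤ × ℤ × ℤ))
    (h𝒞pos : ∀ c ∈ 𝒞, 0 < c.2.2.1 ∧ 0 < c.2.2.2)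
    (h𝒞disj : ∀ c ∈ 𝒞, ∀ c' ∈ 𝒞, c ≠ c' → RegT c ∩ RegT c' = ∅)
    (hsol : ∃ x y, IsSolution (m + 1) wB hB 𝒞 x y)
    (sw sh : ℤ)
    (hsw : IsGreatest (Set.range wB) sw) (hsh : IsGreatest (Set.range hB) sh)
    (cut : (ℤ × ℤ × ℤ × ℤ) → Set (ℤ × ℤ × ℤ × ℤ))
    (hcut : ∀ c ∈ 𝒞, SigmaCut q1 q2 sw sh c (cut c))
    (𝒞σ : Set (ℤ × ℤ × ℤ × ℤ)) (h𝒞σ : 𝒞σ = ⋃ c ∈ 𝒞, cut c)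
    (cstar : ℤ × ℤ × ℤ × ℤ) (hcstar : cstar ∈ 𝒞σ)
    (hfit : wB 0 ≤ cstar.2.2.1 ∧ hB 0 ≤ cstar.2.2.2)
    (hminimal : ∀ c ∈ 𝒞σ, wB 0 ≤ c.2.2.1 → hB 0 ≤ c.2.2.2 →
      sizeLE (cstar.2.2.1, cstar.2.2.2) (c.2.2.1, c.2.2.2)) :
    ∃ x y, IsSolution (m + 1) wB hB 𝒞σ x y ∧ x 0 = cstar.1 ∧ y 0 = cstar.2.1 :=
  stmt12_general q1 q2 hq1 hq2 m wB hB hBreg hsorted 𝒞 h𝒞disj hsol sw sh hsw hsh cut hcut 𝒞σ h𝒞σ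
    cstar hcstar hfit hminimal
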